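/- Let L be the free Lie algebra on two generators x, y over a field k of characteristic 0. Set x' = x + [x,[x,y]] and y' = y + [x,[x,[x,y]]]. Then the images of x' and y' form a basis of L/[L,L], but [x,y] does not lie in the Lie subalgebra of L generated by x' and y'. -/

import Mathlib

/-!
In the abelianization `L/[L,L]` of a free Lie algebra the images of the generators form a basis:
they span because `span {x, y} + [L,L]` is a Lie subalgebra containing the generators, and they
are independent because `x ↦ (1,0)`, `y ↦ (0,1)` extends to a Lie map to the abelian `k²`.
Since `x' ≡ x` and `y' ≡ y` modulo `[L,L]`, the first claim follows.

For the second, map `L` to `gl₂(k)` by `x ↦ E₀₀`, `y ↦ 2E₀₀ + E₀₁`. As `ad E₀₀` fixes `E₀₁`,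
`x' ↦ E₀₀ + E₀₁` and `y' ↦ 2(E₀₀ + E₀₁)`, so the subalgebra generated by `x', y'` lands in the
line through `E₀₀ + E₀₁`, which is an abelian subalgebra; but `[x,y] ↦ E₀₁` is not on it.
-/

open FreeLieAlgebra LieSubalgebra Submodule

attribute [local instance] LieRing.ofAssociativeRing

section BracketSpan

variable (R L : Type*) [CommRing R] [LieRing L] [LieAlgebra R L]

def bracketSpan : Submodule R L := span R {z : L | ∃ a b : L, ⁅a, b⁆ = z}

variable {R L}

lemma lie_mem_bracketSpan (a b : L) : ⁅a, b⁆ ∈ bracketSpan R L := subset_span ⟨a, b, rfl⟩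

lemma bracketSpan_le_ker {M : Type*} [LieRing M] [LieAlgebra R M] [IsLieAbelian M]
    (f : L →ₗ⁅R⁆ M) : bracketSpan R L ≤ LinearMap.ker (f : L →ₗ[R] M) :=
  span_le.2 <| by rintro _ ⟨a, b, rfl⟩; simp [trivial_lie_zero]

lemma span_sup_bracketSpan_eq_top {s : Set L} (hs : lieSpan R L s = ⊤) :
    span R s ⊔ bracketSpan R L = ⊤ := by
  let W : LieSubalgebra R L :=
    { span R s ⊔ bracketSpan R L with
      lie_mem' := fun _ _ => mem_sup_right (lie_mem_bracketSpan _ _) }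
  have hW : lieSpan R L s ≤ W := lieSpan_le.2 fun z hz => mem_sup_left (subset_span hz)
  exact eq_top_iff.2 fun z _ => hW (hs ▸ LieSubalgebra.mem_top z)

lemma span_image_mkQ_eq_top {s : Set L} (hs : lieSpan R L s = ⊤) :
    span R ((bracketSpan R L).mkQ '' s) = ⊤ := by
  rw [← map_span, map_mkQ_eq_top, sup_comm, span_sup_bracketSpan_eq_top hs]

end BracketSpan

namespace FreeLieAlgebra

variable (R X : Type*) [CommRing R]

lemma lieSpan_range_of : lieSpan R (FreeLieAlgebra R X) (Set.range (of R)) = ⊤ := by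
  set W := lieSpan R (FreeLieAlgebra R X) (Set.range (of R))
  let F : FreeLieAlgebra R X →ₗ⁅R⁆ W := lift R fun i => ⟨of R i, subset_lieSpan ⟨i, rfl⟩⟩
  have hF : W.incl.comp F = LieHom.id (R := R) := hom_ext fun i => by simp [F]
  refine eq_top_iff.2 fun z _ => ?_
  have hz : (F z : FreeLieAlgebra R X) = z := DFunLike.congr_fun hF z
  exact hz ▸ (F z).2

lemma linearIndependent_mkQ_of :
    LinearIndependent R fun i => (bracketSpan R (FreeLieAlgebra R X)).mkQ (of R i) := by
  classical
  have : IsLieAbelian (X → R) := isMulCommutative_iff_isLieAbelian.1 inferInstance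
  let f : FreeLieAlgebra R X →ₗ⁅R⁆ (X → R) := lift R fun i => Pi.single i 1
  refine LinearIndependent.of_comp
    ((bracketSpan R _).liftQ f.toLinearMap (bracketSpan_le_ker f)) ?_
  have hf : ∀ i, f (of R i) = Pi.single i 1 := lift_of_apply _
  simpa [Function.comp_def, hf] using Pi.linearIndependent_single_one X R

noncomputable def abelianizationBasis :
    Module.Basis X R (FreeLieAlgebra R X ⧸ bracketSpan R (FreeLieAlgebra R X)) :=
  .mk (linearIndependent_mkQ_of R X) <| by
    rw [Set.range_comp', span_image_mkQ_eq_top (lieSpan_range_of R X)]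

@[simp]
lemma abelianizationBasis_apply (i : X) :
    abelianizationBasis R X i = (bracketSpan R (FreeLieAlgebra R X)).mkQ (of R i) :=
  Module.Basis.mk_apply ..

end FreeLieAlgebra

section LieSpan

variable {R L L' : Type*} [CommRing R] [LieRing L] [LieAlgebra R L] [LieRing L']
  [LieAlgebra R L']

lemma LieSubalgebra.mem_lieSpan_singleton {a b : L} :
    b ∈ lieSpan R L {a} ↔ ∃ c : R, c • a = b := by
  refine ⟨fun hb => ?_, fun ⟨c, hc⟩ => hc ▸ smul_mem _ c (subset_lieSpan rfl)⟩
  let T : LieSubalgebra R L :=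
    { R ∙ a with
      lie_mem' := fun {u v} hu hv => by
        obtain ⟨c, rfl⟩ := mem_span_singleton.1 hu
        obtain ⟨d, rfl⟩ := mem_span_singleton.1 hv
        simp }
  have hT : lieSpan R L {a} ≤ T :=
    lieSpan_le.2 (Set.singleton_subset_iff.2 (mem_span_singleton_self a))
  exact mem_span_singleton.1 (hT hb)

lemma lie_notMem_lieSpan_of_lieHom (φ : L →ₗ⁅R⁆ L') {x y : L} {a e : L'}
    (hx : φ x = a) (hy : φ y = (2 : R) • a + e) (hae : ⁅a, e⁆ = e) (he : e ∉ R ∙ (a + e)) :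
    ⁅x, y⁆ ∉ lieSpan R L {x + ⁅x, ⁅x, y⁆⁆, y + ⁅x, ⁅x, ⁅x, y⁆⁆⁆} := by
  have hxy : φ ⁅x, y⁆ = e := by simp [hx, hy, hae]
  have hx' : φ (x + ⁅x, ⁅x, y⁆⁆) = a + e := by simp [hx, hxy, hae]
  have hy' : φ (y + ⁅x, ⁅x, ⁅x, y⁆⁆⁆) = (2 : R) • (a + e) := by
    simp [hx, hy, hxy, hae, smul_add, two_smul R e, add_assoc]
  intro h
  have hle : lieSpan R L {x + ⁅x, ⁅x, y⁆⁆, y + ⁅x, ⁅x, ⁅x, y⁆⁆⁆} ≤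
      (lieSpan R L' {a + e}).comap φ := by
    refine lieSpan_le.2 (Set.insert_subset_iff.2 ⟨?_, Set.singleton_subset_iff.2 ?_⟩)
    · change φ _ ∈ lieSpan R L' {a + e}
      exact hx' ▸ subset_lieSpan rfl
    · change φ _ ∈ lieSpan R L' {a + e}
      exact hy' ▸ smul_mem _ _ (subset_lieSpan rfl)
  obtain ⟨c, hc⟩ := mem_lieSpan_singleton.1 (hle h)
  exact he (mem_span_singleton.2 ⟨c, hc.trans hxy⟩)

end LieSpan

namespace Matrix

variable {n R : Type*} [DecidableEq n] [Ring R] {i j : n}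

lemma lie_single_single_of_ne [Fintype n] (h : i ≠ j) :
    ⁅single i i (1 : R), single i j (1 : R)⁆ = single i j 1 := by
  simp [Ring.lie_def, single_mul_single_same, single_mul_single_of_ne, h.symm]

lemma single_notMem_span_singleton_add [Nontrivial R] (h : i ≠ j) :
    single i j (1 : R) ∉ R ∙ (single i i 1 + single i j 1) := by
  rw [mem_span_singleton]
  rintro ⟨c, hc⟩
  have hii := congr_fun₂ hc i i
  have hij := congr_fun₂ hc i j
  simp [h, h.symm] at hii hij
  exact zero_ne_one (hii.symm.trans hij)

end Matrix

theorem stmt8_general (k : Type*) [Field k]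
    (x y : FreeLieAlgebra k (Fin 2))
    (hx : x = FreeLieAlgebra.of k 0) (hy : y = FreeLieAlgebra.of k 1)
    (x' y' : FreeLieAlgebra k (Fin 2))
    (hx' : x' = x + ⁅x, ⁅x, y⁆⁆) (hy' : y' = y + ⁅x, ⁅x, ⁅x, y⁆⁆⁆)
    (D : Submodule k (FreeLieAlgebra k (Fin 2)))
    (hD : D = Submodule.span k
      {z : FreeLieAlgebra k (Fin 2) | ∃ a b : FreeLieAlgebra k (Fin 2), ⁅a, b⁆ = z}) :
    (LinearIndependent k ![D.mkQ x', D.mkQ y'] ∧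
      Submodule.span k {D.mkQ x', D.mkQ y'} = ⊤) ∧
    ⁅x, y⁆ ∉ LieSubalgebra.lieSpan k (FreeLieAlgebra k (Fin 2)) {x', y'} := by
  obtain rfl : D = bracketSpan k _ := hD
  subst hx hy
  refine ⟨?_, ?_⟩
  · set b := abelianizationBasis k (Fin 2)
    have hb : ![(bracketSpan k _).mkQ x', (bracketSpan k _).mkQ y'] = ⇑b := by
      ext i; fin_cases i <;> simp [b, hx', hy', lie_mem_bracketSpan]
    rw [← Matrix.range_cons_cons_empty _ _ ![], hb]
    exact ⟨b.linearIndependent, b.span_eq⟩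
  · subst hx' hy'
    have h01 : (0 : Fin 2) ≠ 1 := zero_ne_one
    exact lie_notMem_lieSpan_of_lieHom (lift k ![Matrix.single 0 0 (1 : k),
      (2 : k) • Matrix.single 0 0 1 + Matrix.single 0 1 1]) (lift_of_apply ..) (lift_of_apply ..)
      (Matrix.lie_single_single_of_ne h01) (Matrix.single_notMem_span_singleton_add h01)

/-- In the free Lie algebra `L` on two generators `x, y` over a field of
characteristic `0`, the elements `x' = x + [x,[x,y]]` and `y' = y + [x,[x,[x,y]]]`
have images forming a basis of `L/[L,L]`, yet `[x,y]` does not lie in the Lie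
subalgebra generated by `x'` and `y'`. -/
theorem stmt8 (k : Type*) [Field k] [CharZero k]
    (x y : FreeLieAlgebra k (Fin 2))
    (hx : x = FreeLieAlgebra.of k 0) (hy : y = FreeLieAlgebra.of k 1)
    (x' y' : FreeLieAlgebra k (Fin 2))
    (hx' : x' = x + ⁅x, ⁅x, y⁆⁆) (hy' : y' = y + ⁅x, ⁅x, ⁅x, y⁆⁆⁆)
    (D : Submodule k (FreeLieAlgebra k (Fin 2)))
    (hD : D = Submodule.span k
      {z : FreeLieAlgebra k (Fin 2) | ∃ a b : FreeLieAlgebra k (Fin 2), ⁅a, b⁆ = z}) :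
    (LinearIndependent k ![D.mkQ x', D.mkQ y'] ∧
      Submodule.span k {D.mkQ x', D.mkQ y'} = ⊤) ∧
    ⁅x, y⁆ ∉ LieSubalgebra.lieSpan k (FreeLieAlgebra k (Fin 2)) {x', y'} :=
  stmt8_general k x y hx hy x' y' hx' hy' D hD
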